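/- arXiv:0706.4177 — 3 statements merged into one kernel-verified Lean document; each statement's English description precedes it below -/
import Mathlib

section
/- Let n ≥ 1 and A ∈ GL_n(ℂ) with minimal polynomial m(X) of degree p, and let C_m be the companion matrix of m. Then for every polynomial q ∈ ℂ[X] and every vector λ = (λ_1, …, λ_p) ∈ ℂ^p one has q(A) · (Σ_{i=1}^p λ_i·A^{−i}) = Σ_{i=1}^p (q(C_m)·λ)_i·A^{−i}, where q(A) and q(C_m) denote evaluation of q at the respective matrices and q(C_m)·λ is a matrix–vector product. -/
/-!
Write `e i = A ^ (-1 - i)`. Left multiplication by `A` sends `e (k + 1)` to `e k`, and sends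
`e 0` to `1 = A ^ (-p) * A ^ p = ∑ c i • A ^ (i - p) = ∑ c i • e (p - 1 - i)` by the minimal
polynomial. Column by column this says that `A` acts on the coordinates of `∑ λ i • e i` through
the companion matrix, hence any polynomial `q(A)` acts through `q(C_m)`.
-/

/-- `c i` is the coefficient `c_i`, so the first column `(c_{p−1}, …, c_0)ᵗ` has entry
`c i.rev` in row `i`. -/
def companionOf (p : ℕ) (c : Fin p → ℂ) : Matrix (Fin p) (Fin p) ℂ :=
  Matrix.of fun i j : Fin p =>
    if (j : ℕ) = (i : ℕ) + 1 then 1 else if (j : ℕ) = 0 then c i.rev else 0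

open Polynomial Matrix

theorem pow_eq_sum_smul_pow_of_aeval_eq_zero {R 𝒜 : Type*} [CommRing R] [Ring 𝒜] [Algebra R 𝒜]
    {a : 𝒜} {p : ℕ} {c : Fin p → R} (h : aeval a (X ^ p - ∑ i : Fin p, C (c i) * X ^ (i : ℕ)) = 0) :
    a ^ p = ∑ i : Fin p, c i • a ^ (i : ℕ) := by
  simpa [sub_eq_zero, Algebra.smul_def] using h

section LinearCombination

variable {R ι 𝒜 : Type*} [CommSemiring R] [Fintype ι] [Semiring 𝒜] [Algebra R 𝒜]

theorem mul_sum_smul_eq_sum_mulVec_smul {a : 𝒜} {M : Matrix ι ι R} {v : ι → 𝒜}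
    (hcol : ∀ j, a * v j = ∑ i, M i j • v i) (l : ι → R) :
    a * ∑ i, l i • v i = ∑ i, (M *ᵥ l) i • v i := by
  simp only [Finset.mul_sum, mul_smul_comm, hcol, Finset.smul_sum, smul_smul, mulVec, dotProduct,
    Finset.sum_smul]
  rw [Finset.sum_comm]
  simp only [mul_comm]

theorem aeval_mul_sum_smul_eq_sum_aeval_mulVec_smul [DecidableEq ι] {a : 𝒜} {M : Matrix ι ι R}
    {v : ι → 𝒜} (hcol : ∀ j, a * v j = ∑ i, M i j • v i) (q : R[X]) (l : ι → R) :
    aeval a q * ∑ i, l i • v i = ∑ i, (aeval M q *ᵥ l) i • v i := by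
  induction q using Polynomial.induction_on generalizing l with
  | C r =>
    simp only [aeval_C, Algebra.algebraMap_eq_smul_one, smul_mulVec, one_mulVec, smul_one_mul,
      Finset.smul_sum, Pi.smul_apply, smul_smul, smul_eq_mul]
  | add f g hf hg =>
    simp only [map_add, add_mul, add_mulVec, Pi.add_apply, add_smul, Finset.sum_add_distrib, hf, hg]
  | monomial k r ih =>
    rw [pow_succ, ← mul_assoc, map_mul (aeval a) _ X, map_mul (aeval M) _ X, aeval_X, aeval_X,
      mul_assoc, mul_sum_smul_eq_sum_mulVec_smul hcol, ih, mulVec_mulVec]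

end LinearCombination

section Companion

variable {p : ℕ} (c : Fin p → ℂ)

theorem companionOf_apply_zero (i : Fin p) (h : 0 < p) :
    companionOf p c i ⟨0, h⟩ = c i.rev := by
  simp [companionOf]

theorem companionOf_apply_succ (i : Fin p) {k : ℕ} (h : k + 1 < p) :
    companionOf p c i ⟨k + 1, h⟩ = if (i : ℕ) = k then 1 else 0 := by
  simp [companionOf, eq_comm]

variable {n : Type*} [Fintype n] [DecidableEq n] {A : Matrix n n ℂ}

theorem mul_zpow_neg_one_sub_eq_sum_companionOf_smul (hA : IsUnit A.det)
    (hAp : A ^ p = ∑ i : Fin p, c i • A ^ (i : ℕ)) (j : Fin p) :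
    A * A ^ (-1 - (j : ℤ)) = ∑ i : Fin p, companionOf p c i j • A ^ (-1 - (i : ℤ)) := by
  obtain ⟨_ | k, hk⟩ := j
  · simp only [companionOf_apply_zero c _ hk]
    calc A * A ^ (-1 - ((0 : ℕ) : ℤ)) = A ^ (-(p : ℤ)) * A ^ p := by
          rw [← zpow_natCast, ← zpow_add hA, ← zpow_one_add hA]; simp
      _ = ∑ i : Fin p, c i • A ^ ((i : ℕ) - (p : ℤ)) := by
          simp only [hAp, Finset.mul_sum, mul_smul_comm, ← zpow_natCast, ← zpow_add hA,
            neg_add_eq_sub]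
      _ = ∑ i : Fin p, c i.rev • A ^ (-1 - (i : ℤ)) :=
          Fintype.sum_equiv Fin.revPerm _ _ fun i => by
            simp only [Fin.revPerm_apply, Fin.rev_rev, Fin.val_rev]
            congr 2; omega
  · simp only [companionOf_apply_succ c _ hk, ite_smul, one_smul, zero_smul]
    rw [Finset.sum_eq_single ⟨k, by omega⟩ (fun i _ hi => if_neg (fun h => hi (Fin.ext h)))
      (by simp), if_pos rfl, ← zpow_one_add hA]
    congr 1; push_cast; ring

end Companion

theorem aeval_mul_span_basis_eq_companion_mulVec_general (n : ℕ)
    (A : Matrix (Fin n) (Fin n) ℂ) (hA : IsUnit A) (p : ℕ)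
    (c : Fin p → ℂ)
    (hm : minpoly ℂ A =
      Polynomial.X ^ p - ∑ i : Fin p, Polynomial.C (c i) * Polynomial.X ^ (i : ℕ))
    (q : Polynomial ℂ) (lam : Fin p → ℂ) :
    Polynomial.aeval A q * (∑ i : Fin p, lam i • A ^ (-1 - (i : ℤ))) =
      ∑ i : Fin p, (Polynomial.aeval (companionOf p c) q).mulVec lam i • A ^ (-1 - (i : ℤ)) := by
  have hAp : A ^ p = ∑ i : Fin p, c i • A ^ (i : ℕ) :=
    pow_eq_sum_smul_pow_of_aeval_eq_zero (hm ▸ minpoly.aeval ℂ A)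
  have hdet : IsUnit A.det := (isUnit_iff_isUnit_det A).mp hA
  exact aeval_mul_sum_smul_eq_sum_aeval_mulVec_smul
    (mul_zpow_neg_one_sub_eq_sum_companionOf_smul c hdet hAp) q lam

/-- if `A` has minimal polynomial `m = X^p − c_{p−1}X^{p−1} − ⋯ − c_0` with
companion matrix `C_m`, then for every polynomial `q` and every `λ ∈ ℂ^p`,
`q(A) · (Σ_{i=1}^p λ_i A^{−i}) = Σ_{i=1}^p (q(C_m) λ)_i A^{−i}` (zero-based: index
`i : Fin p` corresponds to the basis element `A^{−1−i}`). -/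
theorem aeval_mul_span_basis_eq_companion_mulVec (n : ℕ) (hn : 1 ≤ n)
    (A : Matrix (Fin n) (Fin n) ℂ) (hA : IsUnit A) (p : ℕ) (hp : 1 ≤ p)
    (c : Fin p → ℂ)
    (hm : minpoly ℂ A =
      Polynomial.X ^ p - ∑ i : Fin p, Polynomial.C (c i) * Polynomial.X ^ (i : ℕ))
    (q : Polynomial ℂ) (lam : Fin p → ℂ) :
    Polynomial.aeval A q * (∑ i : Fin p, lam i • A ^ (-1 - (i : ℤ))) =
      ∑ i : Fin p, (Polynomial.aeval (companionOf p c) q).mulVec lam i • A ^ (-1 - (i : ℤ)) :=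
  aeval_mul_span_basis_eq_companion_mulVec_general n A hA p c hm q lam
end

section
/- Let n ≥ 1, let A ∈ Mat_n(ℂ) have minimal polynomial m(X) over ℂ, and let f ∈ ℂ[X] be a monic polynomial of degree d ≥ 1. Then there exists a matrix Ã ∈ Mat_{n+d}(ℂ) such that: (1) the minimal polynomial of Ã over ℂ equals m(X)·f(X); (2) the upper-left n×n block of Ã equals A; (3) the lower-left d×n block of Ã is zero and the lower-right d×d block of Ã is upper triangular. -/
/-!
Over any field, a matrix `A` has a vector `v` whose annihilating ideal in `K[X]` is generated by
the minimal polynomial `m` of `A` (structure theorem over the PID `K[X]`). Bordering `A` by the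
column `v` and the scalar `μ` gives `M = [[A, v], [0, μ]]`: then `m(M) (M - μ)` vanishes, and
conversely any `p` with `p(M) = 0` has `p(μ) = 0` (lower-right entry), so `p = q·(X - μ)`, and
applying `p(M)` to the last basis vector gives `q(A) v = 0`, whence `m ∣ q`. So the minimal
polynomial of `M` is `m·(X - μ)`. Splitting `f` into linear factors over `ℂ` and bordering once
per root yields the triangular extension.
-/

open Polynomial Matrix

theorem Module.End.exists_aeval_apply_eq_zero_iff_minpoly_dvd {K V : Type*} [Field K]
    [AddCommGroup V] [Module K V] [FiniteDimensional K V] (φ : Module.End K V) :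
    ∃ v : V, ∀ p : K[X], aeval φ p v = 0 ↔ minpoly K φ ∣ p := by
  obtain ⟨x, hx⟩ := Module.exists_ker_toSpanSingleton_eq_annihilator K[X] (Module.AEval' φ)
  obtain ⟨v, rfl⟩ := (Module.AEval'.of φ).surjective x
  rw [← span_minpoly_eq_annihilator] at hx
  refine ⟨v, fun p => ?_⟩
  rw [← Ideal.mem_span_singleton, ← hx, LinearMap.mem_ker, LinearMap.toSpanSingleton_apply,
    ← Module.AEval.of_aeval_smul, LinearEquiv.map_eq_zero_iff]
  rfl

theorem Matrix.exists_aeval_mulVec_eq_zero_iff_minpoly_dvd {K ι : Type*} [Field K] [Fintype ι]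
    [DecidableEq ι] (A : Matrix ι ι K) :
    ∃ v : ι → K, ∀ p : K[X], aeval A p *ᵥ v = 0 ↔ minpoly K A ∣ p := by
  obtain ⟨v, hv⟩ := Module.End.exists_aeval_apply_eq_zero_iff_minpoly_dvd (toLinAlgEquiv' A)
  refine ⟨v, fun p => ?_⟩
  rw [← minpoly.algEquiv_eq toLinAlgEquiv' A, ← hv, aeval_algEquiv]
  rfl

theorem Matrix.exists_aeval_fromBlocks_zero₂₁ {R l m : Type*} [CommRing R] [Fintype l] [Fintype m]
    [DecidableEq l] [DecidableEq m] (A : Matrix l l R) (B : Matrix l m R) (D : Matrix m m R)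
    (p : R[X]) : ∃ Q, aeval (fromBlocks A B 0 D) p = fromBlocks (aeval A p) Q 0 (aeval D p) := by
  induction p using Polynomial.induction_on with
  | C a => exact ⟨0, by simp [algebraMap_eq_diagonal, fromBlocks_diagonal]⟩
  | add p q hp hq =>
    obtain ⟨Q₁, h₁⟩ := hp
    obtain ⟨Q₂, h₂⟩ := hq
    exact ⟨Q₁ + Q₂, by simp [h₁, h₂, fromBlocks_add]⟩
  | monomial k a h =>
    obtain ⟨Q, hQ⟩ := h
    refine ⟨aeval A (C a * X ^ k) * B + Q * D, ?_⟩
    rw [pow_succ, ← mul_assoc, map_mul, hQ, aeval_X, fromBlocks_multiply]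
    simp

theorem Matrix.minpoly_fromBlocks_replicateCol {K ι : Type*} [Field K] [Fintype ι] [DecidableEq ι]
    (A : Matrix ι ι K) (v : ι → K) (hv : ∀ p : K[X], aeval A p *ᵥ v = 0 → minpoly K A ∣ p)
    (μ : K) :
    minpoly K
        (fromBlocks A (replicateCol (Fin 1) v) 0 (algebraMap K (Matrix (Fin 1) (Fin 1) K) μ)) =
      minpoly K A * (X - C μ) := by
  set M := fromBlocks A (replicateCol (Fin 1) v) 0 (algebraMap K (Matrix (Fin 1) (Fin 1) K) μ)
  have hblocks (p : K[X]) :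
      ∃ Q, aeval M p = fromBlocks (aeval A p) Q 0 (algebraMap K _ (p.eval μ)) := by
    obtain ⟨Q, hQ⟩ := exists_aeval_fromBlocks_zero₂₁ A (replicateCol (Fin 1) v) _ p
    exact ⟨Q, by rw [hQ, aeval_algebraMap_apply_eq_algebraMap_eval]⟩
  have hannihilates : aeval M (minpoly K A * (X - C μ)) = 0 := by
    obtain ⟨Q, hQ⟩ := hblocks (minpoly K A)
    obtain ⟨Q', hQ'⟩ := hblocks (X - C μ)
    rw [map_mul, hQ, hQ', minpoly.aeval, fromBlocks_multiply]
    simp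
  have hcolumn : aeval M (X - C μ) *ᵥ Pi.single (Sum.inr 0) 1 = Sum.elim v 0 := by
    ext (i | i) <;> simp [M, algebraMap_matrix_apply]
  have hdvd : minpoly K A * (X - C μ) ∣ minpoly K M := by
    obtain ⟨Q, hQ⟩ := hblocks (minpoly K M)
    have hroot : (minpoly K M).IsRoot μ := by
      have := congrFun (congrFun (minpoly.aeval K M) (Sum.inr 0)) (Sum.inr 0)
      simpa [hQ, algebraMap_matrix_apply] using this
    obtain ⟨q, hq⟩ := dvd_iff_isRoot.mpr hroot
    obtain ⟨Q', hQ'⟩ := hblocks q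
    have hqv : aeval A q *ᵥ v = 0 := by
      have := congrArg (· *ᵥ Pi.single (Sum.inr (0 : Fin 1)) (1 : K)) (minpoly.aeval K M)
      simp only [hq, mul_comm (X - C μ), map_mul, ← mulVec_mulVec, hcolumn, hQ',
        fromBlocks_mulVec, zero_mulVec] at this
      ext i
      simpa using congrFun this (Sum.inl i)
    rw [hq, mul_comm (X - C μ)]
    exact mul_dvd_mul_right (hv q hqv) _
  exact (eq_of_monic_of_associated (minpoly.monic (Algebra.IsIntegral.isIntegral M))
    ((minpoly.monic (Algebra.IsIntegral.isIntegral A)).mul (monic_X_sub_C μ))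
    (associated_of_dvd_dvd (minpoly.dvd K M hannihilates) hdvd))

def Matrix.IsTriangularExtension {K : Type*} [Zero K] {n d : ℕ} (A : Matrix (Fin n) (Fin n) K)
    (Atil : Matrix (Fin (n + d)) (Fin (n + d)) K) : Prop :=
  (∀ i j : Fin n, Atil (Fin.castAdd d i) (Fin.castAdd d j) = A i j) ∧
  (∀ (i : Fin d) (j : Fin n), Atil (Fin.natAdd n i) (Fin.castAdd d j) = 0) ∧
  ∀ i j : Fin d, (j : ℕ) < i → Atil (Fin.natAdd n i) (Fin.natAdd n j) = 0

namespace Matrix.IsTriangularExtension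

variable {K : Type*} [Zero K] {n d : ℕ}

theorem refl (A : Matrix (Fin n) (Fin n) K) : IsTriangularExtension (d := 0) A A :=
  ⟨fun _ _ => rfl, fun i => i.elim0, fun i => i.elim0⟩

-- `n + (d + 1)` and `n + d + 1` are definitionally equal, so `A₂` is an `(n + (d + 1))`-matrix.
theorem succ {A : Matrix (Fin n) (Fin n) K} {A₁ : Matrix (Fin (n + d)) (Fin (n + d)) K}
    {A₂ : Matrix (Fin (n + d + 1)) (Fin (n + d + 1)) K} (h₁ : IsTriangularExtension A A₁)
    (h₂ : IsTriangularExtension (d := 1) A₁ A₂) : IsTriangularExtension (d := d + 1) A A₂ := by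
  obtain ⟨h₁₁, h₁₂, h₁₃⟩ := h₁
  obtain ⟨h₂₁, h₂₂, -⟩ := h₂
  refine ⟨fun i j => ?_, fun i j => ?_, fun i j hji => ?_⟩
  · exact (h₂₁ _ _).trans (h₁₁ i j)
  · induction i using Fin.lastCases with
    | last => exact h₂₂ 0 (Fin.castAdd d j)
    | cast i => exact (h₂₁ _ _).trans (h₁₂ i j)
  · obtain ⟨j, rfl⟩ := Fin.exists_castSucc_eq.mpr (Fin.ne_last_of_lt hji)
    induction i using Fin.lastCases with
    | last => exact h₂₂ 0 (Fin.natAdd n j)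
    | cast i => exact (h₂₁ _ _).trans (h₁₃ i j hji)

end Matrix.IsTriangularExtension

theorem Matrix.exists_isTriangularExtension_minpoly_mul_X_sub_C {K : Type*} [Field K] {n : ℕ}
    (A : Matrix (Fin n) (Fin n) K) (μ : K) :
    ∃ A' : Matrix (Fin (n + 1)) (Fin (n + 1)) K,
      minpoly K A' = minpoly K A * (X - C μ) ∧ IsTriangularExtension A A' := by
  obtain ⟨v, hv⟩ := A.exists_aeval_mulVec_eq_zero_iff_minpoly_dvd
  refine ⟨reindexAlgEquiv K K finSumFinEquiv
    (fromBlocks A (replicateCol (Fin 1) v) 0 (algebraMap K (Matrix (Fin 1) (Fin 1) K) μ)),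
    ?_, fun i j => ?_, fun i j => ?_, fun i j hji => ?_⟩
  · rw [minpoly.algEquiv_eq, minpoly_fromBlocks_replicateCol A v (fun p => (hv p).mp)]
  · simp [coe_reindexAlgEquiv]
  · simp [coe_reindexAlgEquiv]
  · exact absurd hji (by omega)

theorem Polynomial.Monic.exists_eq_mul_X_sub_C {K : Type*} [Field K] [IsAlgClosed K] {f : K[X]}
    (hf : f.Monic) {d : ℕ} (hdeg : f.natDegree = d + 1) :
    ∃ g μ, g.Monic ∧ g.natDegree = d ∧ f = g * (X - C μ) := by
  obtain ⟨μ, hμ⟩ := IsAlgClosed.exists_root f <| by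
    rw [degree_eq_natDegree hf.ne_zero, hdeg]
    exact Nat.cast_add_one_ne_zero d
  obtain ⟨g, rfl⟩ := dvd_iff_isRoot.mpr hμ
  rw [mul_comm] at hf hdeg
  have hg := Monic.of_mul_monic_right (monic_X_sub_C μ) hf
  refine ⟨g, μ, hg, ?_, mul_comm _ _⟩
  rw [hg.natDegree_mul (monic_X_sub_C μ), natDegree_X_sub_C] at hdeg
  omega

theorem exists_extension_minpoly_mul_general (n : ℕ)
    (A : Matrix (Fin n) (Fin n) ℂ) (d : ℕ)
    (f : Polynomial ℂ) (hf : f.Monic) (hdeg : f.natDegree = d) :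
    ∃ Atil : Matrix (Fin (n + d)) (Fin (n + d)) ℂ,
      minpoly ℂ Atil = minpoly ℂ A * f ∧
      (∀ i j : Fin n, Atil (Fin.castAdd d i) (Fin.castAdd d j) = A i j) ∧
      (∀ (i : Fin d) (j : Fin n), Atil (Fin.natAdd n i) (Fin.castAdd d j) = 0) ∧
      (∀ i j : Fin d, (j : ℕ) < (i : ℕ) → Atil (Fin.natAdd n i) (Fin.natAdd n j) = 0) := by
  induction d generalizing f with
  | zero =>
    obtain rfl := eq_one_of_monic_natDegree_zero hf hdeg
    exact ⟨A, mul_one _ |>.symm, IsTriangularExtension.refl A⟩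
  | succ d ih =>
    obtain ⟨g, μ, hg, hgdeg, rfl⟩ := hf.exists_eq_mul_X_sub_C hdeg
    obtain ⟨A₁, hA₁, hA₁A⟩ := ih g hg hgdeg
    obtain ⟨A₂, hA₂, hA₂A₁⟩ := exists_isTriangularExtension_minpoly_mul_X_sub_C A₁ μ
    exact ⟨A₂, by rw [hA₂, hA₁, mul_assoc], IsTriangularExtension.succ hA₁A hA₂A₁⟩

/-- for `A ∈ Mat_n(ℂ)` with minimal polynomial `m` and a monic `f ∈ ℂ[X]` of
degree `d ≥ 1`, there is `Ã ∈ Mat_{n+d}(ℂ)` whose minimal polynomial is `m·f`, whose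
upper-left `n×n` block is `A`, whose lower-left `d×n` block is zero, and whose lower-right
`d×d` block is upper triangular. -/
theorem exists_extension_minpoly_mul (n : ℕ) (hn : 1 ≤ n)
    (A : Matrix (Fin n) (Fin n) ℂ) (d : ℕ) (hd : 1 ≤ d)
    (f : Polynomial ℂ) (hf : f.Monic) (hdeg : f.natDegree = d) :
    ∃ Atil : Matrix (Fin (n + d)) (Fin (n + d)) ℂ,
      minpoly ℂ Atil = minpoly ℂ A * f ∧
      (∀ i j : Fin n, Atil (Fin.castAdd d i) (Fin.castAdd d j) = A i j) ∧
      (∀ (i : Fin d) (j : Fin n), Atil (Fin.natAdd n i) (Fin.castAdd d j) = 0) ∧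
      (∀ i j : Fin d, (j : ℕ) < (i : ℕ) → Atil (Fin.natAdd n i) (Fin.natAdd n j) = 0) :=
  exists_extension_minpoly_mul_general n A d f hf hdeg
end

section
/- Let n ≥ 1, let A ∈ GL_n(ℂ), and let Q(X) = X^p − c_{p−1}X^{p−1} − ⋯ − c_1X − c_0 ∈ ℂ[X] be a monic polynomial of degree p ≥ 1 with Q(A) = 0 and c_0 ≠ 0. Let C_Q be the companion matrix of Q and c := (c_{p−1}, c_{p−2}, …, c_0) ∈ ℂ^p. Then C_Q is invertible, and for every integer k ∈ ℤ one has A^k = Σ_{i=1}^p ((C_Q)^k·c)_i · A^{−i}, where (C_Q)^k·c denotes the matrix–vector product of the k-th (integer) power of C_Q with c. -/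
/-!
Let `Φ v = ∑ᵢ vᵢ • A^(-1-i)` (`invPowCombination A p`). Multiplying `Q(A) = 0` by `A^(-p)`
gives `Φ c = 1`. Since `C_Q` shifts a vector up and adds its first coordinate times `c`, this
yields `Φ (C_Q v) = A Φ v`, hence `Φ (C_Q^k v) = A^k Φ v` for every `k ∈ ℤ`, and `v = c` gives
`A^k = Φ (C_Q^k c)`. A vector killed by `C_Q` has first coordinate `0` by the last row (as
`c_0 ≠ 0`), and then all other coordinates vanish by the shift, so `C_Q` is invertible.
-/

open Matrix

theorem companionOf_mulVec {m : ℕ} (c v : Fin (m + 1) → ℂ) :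
    companionOf (m + 1) c *ᵥ v =
      Fin.snoc (α := fun _ => ℂ) (Fin.tail v) 0 + v 0 • fun j => c j.rev := by
  have hentry : ∀ i j : Fin (m + 1), companionOf (m + 1) c i j =
      (if (j : ℕ) = i + 1 then 1 else 0) + if j = 0 then c i.rev else 0 := by
    intro i j
    simp only [companionOf, of_apply, Fin.ext_iff, Fin.val_zero]
    split_ifs <;> first | omega | simp
  ext i
  simp only [mulVec, dotProduct, hentry, add_mul, Finset.sum_add_distrib, ite_mul, one_mul,
    zero_mul, Finset.sum_ite_eq', Finset.mem_univ, if_true, Pi.add_apply, Pi.smul_apply,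
    smul_eq_mul]
  congr 1
  · induction i using Fin.lastCases with
    | last =>
      rw [Fin.snoc_last]
      exact Finset.sum_eq_zero fun j _ => if_neg (by simp only [Fin.val_last]; omega)
    | cast i =>
      rw [Fin.snoc_castSucc, Fin.tail, Finset.sum_eq_single i.succ]
      · simp
      · exact fun j _ hj => if_neg fun h => hj (Fin.ext (by simpa using h))
      · simp
  · ring

theorem isUnit_companionOf {m : ℕ} {c : Fin (m + 1) → ℂ} (hc0 : c 0 ≠ 0) :
    IsUnit (companionOf (m + 1) c) := by
  rw [isUnit_iff_isUnit_det, isUnit_iff_ne_zero, Ne, ← exists_mulVec_eq_zero_iff]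
  rintro ⟨v, hv, hCv⟩
  rw [companionOf_mulVec] at hCv
  have hv0 : v 0 = 0 := by
    simpa [Fin.snoc_last, hc0] using congrFun hCv (Fin.last m)
  have htail : Fin.tail v = 0 := by
    ext i
    simpa [hv0] using congrFun hCv i.castSucc
  exact hv (funext fun i => Fin.cases hv0 (congrFun htail) i)

theorem apply_zpow_mulVec_eq_zpow_mul {K : Type*} [CommRing K] {m n : Type*}
    [Fintype m] [DecidableEq m] [Fintype n] [DecidableEq n] {C : Matrix m m K}
    {A : Matrix n n K} (hC : IsUnit C) (hA : IsUnit A) {f : (m → K) → Matrix n n K}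
    (hf : ∀ v, f (C *ᵥ v) = A * f v) (k : ℤ) (v : m → K) :
    f (C ^ k *ᵥ v) = A ^ k * f v := by
  have hCd := (isUnit_iff_isUnit_det C).mp hC
  have hAd := (isUnit_iff_isUnit_det A).mp hA
  induction k using Int.induction_on with
  | zero => simp
  | succ k ih =>
    rw [add_comm, zpow_one_add hCd, zpow_one_add hAd, ← mulVec_mulVec, hf, ih, mul_assoc]
  | pred k ih =>
    refine hA.mul_left_cancel ?_
    rw [← hf, mulVec_mulVec, ← zpow_one_add hCd, ← mul_assoc, ← zpow_one_add hAd,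
      add_sub_cancel, ih]

section InvPowCombination

variable {K : Type*} [CommRing K] {n : Type*} [Fintype n] [DecidableEq n] (A : Matrix n n K)

noncomputable def invPowCombination (p : ℕ) : (Fin p → K) →ₗ[K] Matrix n n K :=
  Fintype.linearCombination K fun i : Fin p => A ^ (-1 - (i : ℤ))

theorem invPowCombination_apply {p : ℕ} (v : Fin p → K) :
    invPowCombination A p v = ∑ i, v i • A ^ (-1 - (i : ℤ)) :=
  Fintype.linearCombination_apply ..

theorem invPowCombination_snoc {m : ℕ} (v : Fin m → K) (x : K) :
    invPowCombination A (m + 1) (Fin.snoc (α := fun _ => K) v x) =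
      invPowCombination A m v + x • A ^ (-1 - (m : ℤ)) := by
  simp [invPowCombination_apply, Fin.sum_univ_castSucc, Fin.snoc_castSucc, Fin.snoc_last]

variable {A}

theorem mul_invPowCombination (hA : IsUnit A) {m : ℕ} (v : Fin (m + 1) → K) :
    A * invPowCombination A (m + 1) v = v 0 • 1 + invPowCombination A m (Fin.tail v) := by
  have hAd := (isUnit_iff_isUnit_det A).mp hA
  rw [invPowCombination_apply, invPowCombination_apply, Finset.mul_sum, Fin.sum_univ_succ]
  congr 1
  · rw [mul_smul_comm, ← zpow_one_add hAd, Fin.val_zero, Nat.cast_zero, sub_zero,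
      add_neg_cancel, zpow_zero]
  · refine Finset.sum_congr rfl fun i _ => ?_
    rw [mul_smul_comm, ← zpow_one_add hAd, Fin.tail, Fin.val_succ]
    congr 2
    push_cast
    ring

theorem invPowCombination_rev_eq_one (hA : IsUnit A) {p : ℕ} {c : Fin p → K}
    (hQ : Polynomial.aeval A
      (Polynomial.X ^ p - ∑ i : Fin p, Polynomial.C (c i) * Polynomial.X ^ (i : ℕ)) = 0) :
    invPowCombination A p (fun j => c j.rev) = 1 := by
  have hAd := (isUnit_iff_isUnit_det A).mp hA
  have hpow : A ^ p = ∑ i : Fin p, c i • A ^ (i : ℕ) := by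
    simpa [sub_eq_zero, Algebra.smul_def] using hQ
  calc invPowCombination A p (fun j => c j.rev)
      = ∑ i : Fin p, c i • A ^ ((i : ℤ) - p) := by
        rw [invPowCombination_apply,
          ← Fintype.sum_bijective Fin.rev Fin.rev_involutive.bijective _ _ fun i => rfl]
        refine Finset.sum_congr rfl fun i _ => ?_
        rw [Fin.rev_rev, Fin.val_rev]
        congr 2
        omega
    _ = A ^ (-(p : ℤ)) * A ^ p := by
        rw [hpow, Finset.mul_sum]
        refine Finset.sum_congr rfl fun i _ => ?_
        rw [mul_smul_comm, ← zpow_natCast, ← zpow_add hAd, neg_add_eq_sub]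
    _ = 1 := by rw [← zpow_natCast, zpow_neg_mul_zpow_self _ hAd]

end InvPowCombination

theorem invPowCombination_companionOf_mulVec {n : Type*} [Fintype n] [DecidableEq n]
    {A : Matrix n n ℂ} (hA : IsUnit A) {m : ℕ} {c : Fin (m + 1) → ℂ}
    (hQ : Polynomial.aeval A (Polynomial.X ^ (m + 1) -
      ∑ i : Fin (m + 1), Polynomial.C (c i) * Polynomial.X ^ (i : ℕ)) = 0)
    (v : Fin (m + 1) → ℂ) :
    invPowCombination A (m + 1) (companionOf (m + 1) c *ᵥ v) =
      A * invPowCombination A (m + 1) v := by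
  rw [companionOf_mulVec, map_add, map_smul, invPowCombination_snoc,
    invPowCombination_rev_eq_one hA hQ, mul_invPowCombination hA, zero_smul, add_zero, add_comm]

theorem zpow_eq_sum_companion_zpow_mulVec_of_aeval_eq_zero_general (n : ℕ)
    (A : Matrix (Fin n) (Fin n) ℂ) (hA : IsUnit A) (p : ℕ) (hp : 1 ≤ p)
    (c : Fin p → ℂ) (hc0 : c ⟨0, hp⟩ ≠ 0)
    (hQ : Polynomial.aeval A
      (Polynomial.X ^ p - ∑ i : Fin p, Polynomial.C (c i) * Polynomial.X ^ (i : ℕ)) = 0) :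
    IsUnit (companionOf p c) ∧
      ∀ k : ℤ, A ^ k =
        ∑ i : Fin p,
          ((companionOf p c) ^ k).mulVec (fun j : Fin p => c j.rev) i • A ^ (-1 - (i : ℤ)) := by
  obtain ⟨m, rfl⟩ : ∃ m, p = m + 1 := ⟨p - 1, by omega⟩
  have hC : IsUnit (companionOf (m + 1) c) := isUnit_companionOf hc0
  refine ⟨hC, fun k => ?_⟩
  rw [← invPowCombination_apply, apply_zpow_mulVec_eq_zpow_mul hC hA
    (invPowCombination_companionOf_mulVec hA hQ), invPowCombination_rev_eq_one hA hQ, mul_one]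

/-- if `Q = X^p − c_{p−1}X^{p−1} − ⋯ − c_0` satisfies `Q(A) = 0` and
`c_0 ≠ 0`, with companion matrix `C_Q` and `c = (c_{p−1}, …, c_0)` (the vector
`fun j => c j.rev`), then `C_Q` is invertible and for every `k ∈ ℤ`,
`A^k = Σ_{i=1}^p ((C_Q)^k c)_i A^{−i}` (zero-based: `i : Fin p` corresponds to `A^{−1−i}`). -/
theorem zpow_eq_sum_companion_zpow_mulVec_of_aeval_eq_zero (n : ℕ) (hn : 1 ≤ n)
    (A : Matrix (Fin n) (Fin n) ℂ) (hA : IsUnit A) (p : ℕ) (hp : 1 ≤ p)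
    (c : Fin p → ℂ) (hc0 : c ⟨0, hp⟩ ≠ 0)
    (hQ : Polynomial.aeval A
      (Polynomial.X ^ p - ∑ i : Fin p, Polynomial.C (c i) * Polynomial.X ^ (i : ℕ)) = 0) :
    IsUnit (companionOf p c) ∧
      ∀ k : ℤ, A ^ k =
        ∑ i : Fin p,
          ((companionOf p c) ^ k).mulVec (fun j : Fin p => c j.rev) i • A ^ (-1 - (i : ℤ)) :=
  zpow_eq_sum_companion_zpow_mulVec_of_aeval_eq_zero_general n A hA p hp c hc0 hQ
end
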